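/- Let P be a symmetric positive definite n×n real matrix and κ > 0. If the block matrix [[(2-κ)I - P, Fᵀ],[F, P]] is positive semidefinite, then Fᵀ P⁻¹ F - P⁻¹ ≼ -κ I (i.e., Fᵀ P⁻¹ F ≼ P⁻¹ - κI). -/

import Mathlib

/-!
The Schur complement of `P` in the block matrix gives `(2 - κ) - P - Fᵀ P⁻¹ F ⪰ 0`, and
`P⁻¹ + P - 2 = (1 - P)ᴴ P⁻¹ (1 - P) ⪰ 0`; their sum is `P⁻¹ - κ - Fᵀ P⁻¹ F`.
-/

open Matrix
open scoped ComplexOrder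

namespace Matrix.PosDef

variable {𝕜 n : Type*} [RCLike 𝕜] [Fintype n] [DecidableEq n]

theorem posSemidef_inv_add_sub_two {P : Matrix n n 𝕜} (hP : P.PosDef) :
    (P⁻¹ + P - 2).PosSemidef := by
  have := hP.isUnit.invertible
  have hconj : (1 - P)ᴴ * P⁻¹ * (1 - P) = P⁻¹ + P - 2 := by
    rw [conjTranspose_sub, conjTranspose_one, hP.isHermitian.eq]
    simp only [sub_mul, mul_sub, one_mul, mul_one, mul_inv_of_invertible, inv_mul_of_invertible]
    rw [← one_add_one_eq_two]
    abel
  exact hconj ▸ hP.inv.posSemidef.conjTranspose_mul_mul_same (1 - P)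

end Matrix.PosDef

theorem schur_contraction_lmi_general
    {n : ℕ} (P F : Matrix (Fin n) (Fin n) ℝ)
    (hP : P.PosDef)
    (κ : ℝ)
    (hblock : (Matrix.fromBlocks ((2 - κ) • (1 : Matrix (Fin n) (Fin n) ℝ) - P)
        Fᵀ F P).PosSemidef) :
    (P⁻¹ - κ • (1 : Matrix (Fin n) (Fin n) ℝ) - Fᵀ * P⁻¹ * F).PosSemidef := by
  have := hP.isUnit.invertible
  have hschur : ((2 - κ) • 1 - P - Fᵀ * P⁻¹ * F).PosSemidef := by
    simpa using (hP.fromBlocks₂₂ ((2 - κ) • 1 - P) Fᵀ).mp (by simpa using hblock)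
  convert hschur.add hP.posSemidef_inv_add_sub_two using 1
  rw [sub_smul, two_smul, ← one_add_one_eq_two]
  abel

/-- Schur complement argument: if the block matrix
`[[(2-κ)I - P, Fᵀ], [F, P]]` is PSD with `P ≻ 0` and `κ > 0`, then
`Fᵀ P⁻¹ F ≼ P⁻¹ - κ I`. -/
theorem schur_contraction_lmi
    {n : ℕ} (P F : Matrix (Fin n) (Fin n) ℝ)
    (hP : P.PosDef) (hPsymm : P.IsSymm)
    (κ : ℝ) (hκ : 0 < κ)
    (hblock : (Matrix.fromBlocks ((2 - κ) • (1 : Matrix (Fin n) (Fin n) ℝ) - P)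
        Fᵀ F P).PosSemidef) :
    (P⁻¹ - κ • (1 : Matrix (Fin n) (Fin n) ℝ) - Fᵀ * P⁻¹ * F).PosSemidef :=
  schur_contraction_lmi_general P F hP κ hblock
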